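/- (Geometric consequence of the technical conditions) Let W : (0,∞) × ℝⁿ → [0,∞] be lower semicontinuous with the properties: for every (t,x) ∈ dom(W) with t > 0 there exists u with D↑W(t,x)(−1,u) < +∞, and the subsolution inequality p_t + H(x,−p_x) ≤ 0 holds for all (p_t,p_x) ∈ ∂₋W(t,x), where H(x,p) = sup_u(⟨p,u⟩ − L(x,u)) with L continuous and nonnegative. Then for every (t,x) ∈ dom(W) with t > 0: if (p_t, 0, 0) ∈ [T_{Epi(W)}(t,x,W(t,x))]⁻, then p_t = 0. -/

import Mathlib

/-!
`0 ≤ p_t`: since `D↑W(t,x)(-1,u) < ∞`, some `(-1, u, z)` with `z` finite is a contingent direction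
of the epigraph, and pairing it with `(p_t, 0, 0)` gives `-p_t ≤ 0`.

`p_t ≤ 0`: if `p_t > 0`, then `(p_t, 0, 0)` is a regular normal, so near `(t, x)` the points with
`s > t` and `W(s,y) ≤ W(t,x) + N(s - t)` satisfy `2(s - t) ≤ |y - x|`. Minimising
`W + A(s - t)² + C|y - x|² - N(s - t)` over a small box around `(t, x)` then gives an interior
minimiser, hence a proximal subgradient whose time component is at least `N - 1`. Taking `u = 0`
in the Hamiltonian, the subsolution inequality bounds that component by `L(y, 0)`, which is
impossible for `N` large.
-/

open Filter Topology Metric Set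
open scoped RealInnerProductSpace

noncomputable section

abbrev Euc (n : ℕ) := EuclideanSpace ℝ (Fin n)

def contCone {F : Type*} [NormedAddCommGroup F] [NormedSpace ℝ F] (K : Set F) (x : F) : Set F :=
  {v | ∀ ε > 0, ∃ h : ℝ, 0 < h ∧ h < ε ∧ Metric.infDist (x + h • v) K < ε * h}

def Dup {F : Type*} [NormedAddCommGroup F] [NormedSpace ℝ F]
    (W : F → EReal) (x u : F) : EReal :=
  Filter.liminf (fun p : ℝ × F => ((p.1⁻¹ : ℝ) : EReal) * (W (x + p.1 • p.2) - W x))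
    ((𝓝[>] (0:ℝ)) ×ˢ 𝓝 u)

def Ham {n : ℕ} (L : Euc n → Euc n → ℝ) (x p : Euc n) : EReal :=
  ⨆ u : Euc n, ((⟪p, u⟫ - L x u : ℝ) : EReal)

def subdiffP {n : ℕ} (W : ℝ × Euc n → EReal) (q : ℝ × Euc n) : Set (ℝ × Euc n) :=
  {p | ∀ ε > 0, ∀ᶠ z in 𝓝 q,
    W q + ((p.1 * (z.1 - q.1) + ⟪p.2, z.2 - q.2⟫ - ε * ‖z - q‖ : ℝ) : EReal) ≤ W z}

def bolzaValue {n : ℕ} (L : Euc n → Euc n → ℝ) (φ : Euc n → EReal) (t : ℝ) (x : Euc n) : EReal :=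
  sInf {c : EReal | ∃ u : ℝ → Euc n,
    IntervalIntegrable u MeasureTheory.volume 0 t ∧
    IntervalIntegrable (fun s => L (x + ∫ τ in (0:ℝ)..s, u τ) (u s)) MeasureTheory.volume 0 t ∧
    c = ((∫ s in (0:ℝ)..t, L (x + ∫ τ in (0:ℝ)..s, u τ) (u s) : ℝ) : EReal)
        + φ (x + ∫ τ in (0:ℝ)..t, u τ)}

def Superlinear {n : ℕ} (Θ : Euc n → ℝ) : Prop :=
  Filter.Tendsto (fun u : Euc n => Θ u / ‖u‖) (Filter.comap norm Filter.atTop) Filter.atTop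

def negPolar {n : ℕ} (T : Set (Euc n)) : Set (Euc n) :=
  {v | ∀ w ∈ T, ⟪v, w⟫ ≤ 0}

def eepiPos {n : ℕ} (W : ℝ × Euc n → EReal) : Set ((ℝ × Euc n) × ℝ) :=
  {p | 0 < p.1.1 ∧ W p.1 ≤ (p.2 : EReal)}

def negPolarQ {n : ℕ} (T : Set ((ℝ × Euc n) × ℝ)) : Set ((ℝ × Euc n) × ℝ) :=
  {v | ∀ w ∈ T, v.1.1 * w.1.1 + ⟪v.1.2, w.1.2⟫ + v.2 * w.2 ≤ (0:ℝ)}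

section ContingentCone

variable {F : Type*} [NormedAddCommGroup F] [NormedSpace ℝ F]

theorem mem_contCone_of_frequently {K : Set F} {x w : F}
    (h : ∃ᶠ p in 𝓝[>] (0 : ℝ) ×ˢ 𝓝 w, x + p.1 • p.2 ∈ K) : w ∈ contCone K x := by
  intro ε hε
  have hsmall : Ioo 0 ε ×ˢ ball w ε ∈ 𝓝[>] (0 : ℝ) ×ˢ 𝓝 w :=
    prod_mem_prod (Ioo_mem_nhdsGT hε) (ball_mem_nhds w hε)
  obtain ⟨⟨h, v⟩, hK, ⟨hh0, hhε⟩, hv⟩ := (h.and_eventually hsmall).exists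
  refine ⟨h, hh0, hhε, ?_⟩
  calc infDist (x + h • w) K ≤ dist (x + h • w) (x + h • v) := infDist_le_dist_of_mem hK
    _ = h * dist v w := by
      rw [dist_add_left, dist_smul₀, Real.norm_eq_abs, abs_of_pos hh0, dist_comm]
    _ < ε * h := by rw [mul_comm]; exact mul_lt_mul_of_pos_right (mem_ball.1 hv) hh0

/-- A functional that is nonpositive on the contingent cone is a regular (Fréchet) normal. -/
theorem le_mul_dist_of_forall_contCone_le_zero [ProperSpace F] {E : Set F} {q₀ : F}
    {g : F →L[ℝ] ℝ} (hg : ∀ w ∈ contCone E q₀, g w ≤ 0) {δ : ℝ} (hδ : 0 < δ) :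
    ∃ r > 0, ∀ q ∈ E, dist q q₀ ≤ r → g (q - q₀) ≤ δ * dist q q₀ := by
  by_contra! hcon
  choose q hqE hqd hqg using fun i : ℕ => hcon (1 / (i + 1)) Nat.one_div_pos_of_nat
  set h : ℕ → ℝ := fun i => dist (q i) q₀
  have hh : ∀ i, 0 < h i := fun i =>
    dist_pos.2 fun hq => by simpa [hq] using hqg i
  have hh0 : Tendsto h atTop (𝓝[>] 0) :=
    tendsto_nhdsWithin_iff.2 ⟨squeeze_zero (fun i => (hh i).le) hqd
      tendsto_one_div_add_atTop_nhds_zero_nat, Eventually.of_forall hh⟩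
  set w : ℕ → F := fun i => (h i)⁻¹ • (q i - q₀)
  have hw : ∀ i, w i ∈ closedBall (0 : F) 1 := fun i => by
    have hi : ‖q i - q₀‖ ≠ 0 := by simpa [h, dist_eq_norm] using (hh i).ne'
    simp [w, h, norm_smul, dist_eq_norm, inv_mul_cancel₀ hi]
  have hgw : ∀ i, δ ≤ g (w i) := fun i => by
    simp only [w, map_smul, smul_eq_mul]
    exact (le_inv_mul_iff₀ (hh i)).2 (by linarith [hqg i])
  obtain ⟨w₀, -, φ, hφ, hlim⟩ := (isCompact_closedBall (0 : F) 1).tendsto_subseq hw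
  have hcone : w₀ ∈ contCone E q₀ := mem_contCone_of_frequently <|
    ((hh0.comp hφ.tendsto_atTop).prodMk hlim).frequently <| Frequently.of_forall fun k => by
      simpa [w, smul_inv_smul₀ (hh (φ k)).ne'] using hqE (φ k)
  have := ge_of_tendsto' ((g.continuous.tendsto w₀).comp hlim) fun k => hgw (φ k)
  linarith [hg w₀ hcone]

end ContingentCone

theorem EReal.le_coe_add_mul_of_inv_mul_sub_lt {c r z : ℝ} {w : EReal} (hc : 0 < c)
    (h : ((c⁻¹ : ℝ) : EReal) * (w - r) < z) : w ≤ ((r + c * z : ℝ) : EReal) := by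
  induction w using EReal.rec with
  | bot => exact bot_le
  | top => simp [EReal.mul_top_of_pos, hc] at h
  | coe a =>
    norm_cast at h ⊢
    rw [inv_mul_lt_iff₀ hc] at h
    linarith

theorem EReal.add_coe_sub_le_of_add_coe_le {a b : EReal} {x y : ℝ} (h : a + x ≤ b + y) :
    a + ((x - y : ℝ) : EReal) ≤ b :=
  calc a + ((x - y : ℝ) : EReal) = a + x + ((-y : ℝ) : EReal) := by
        rw [add_assoc, ← EReal.coe_add, sub_eq_add_neg]
    _ ≤ b + y + ((-y : ℝ) : EReal) := add_le_add_left h _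
    _ = b := by rw [add_assoc, ← EReal.coe_add, add_neg_cancel, EReal.coe_zero, add_zero]

theorem LowerSemicontinuousOn.exists_isMinOn_add_coe {α : Type*} [TopologicalSpace α]
    {f : α → EReal} {s K : Set α} (hf : LowerSemicontinuousOn f s) (hK : IsCompact K)
    (hKs : K ⊆ s) (hne : K.Nonempty) {ψ : α → ℝ} (hψ : Continuous ψ) :
    ∃ q ∈ K, IsMinOn (fun z => f z + ψ z) K q := by
  have hψK : LowerSemicontinuousOn (fun z => (ψ z : EReal)) K :=
    (continuous_coe_real_ereal.comp hψ).lowerSemicontinuous.lowerSemicontinuousOn K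
  exact LowerSemicontinuousOn.exists_isMinOn hne hK <| (hf.mono hKs).add' hψK fun z _ =>
    EReal.continuousAt_add (p := (f z, ψ z)) (Or.inr (EReal.coe_ne_bot _))
      (Or.inr (EReal.coe_ne_top _))

section Epigraph

variable {n : ℕ} {W : ℝ × Euc n → EReal} {t Wr : ℝ} {x : Euc n}

theorem mem_negPolarQ_horizontal_iff {T : Set ((ℝ × Euc n) × ℝ)} {pt : ℝ} :
    ((pt, (0 : Euc n)), (0 : ℝ)) ∈ negPolarQ T ↔ ∀ w ∈ T, pt * w.1.1 ≤ 0 := by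
  simp [negPolarQ]

theorem exists_mem_contCone_eepiPos_of_Dup_lt_top (ht : 0 < t) (hWr : W (t, x) = Wr) {u : Euc n}
    (hDup : Dup W (t, x) (-1, u) < ⊤) :
    ∃ z : ℝ, (((-1, u), z) : (ℝ × Euc n) × ℝ) ∈ contCone (eepiPos W) ((t, x), Wr) := by
  obtain ⟨z, hz, -⟩ := EReal.exists_between_coe_real hDup
  refine ⟨z, mem_contCone_of_frequently ?_⟩
  have hquot : ∃ᶠ p in 𝓝[>] (0 : ℝ) ×ˢ 𝓝 ((-1 : ℝ), u),
      ((p.1⁻¹ : ℝ) : EReal) * (W ((t, x) + p.1 • p.2) - W (t, x)) < z :=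
    frequently_lt_of_liminf_lt (by isBoundedDefault) hz
  have hpos : ∀ᶠ p in 𝓝[>] (0 : ℝ) ×ˢ 𝓝 ((-1 : ℝ), u), 0 < p.1 ∧ 0 < t + p.1 * p.2.1 := by
    have htime : Tendsto (fun p : ℝ × (ℝ × Euc n) => t + p.1 * p.2.1) (𝓝 (0, (-1, u))) (𝓝 t) :=
      (by fun_prop : Continuous fun p : ℝ × (ℝ × Euc n) => t + p.1 * p.2.1).tendsto' _ _
        (by simp)
    have hle : 𝓝[>] (0 : ℝ) ×ˢ 𝓝 ((-1 : ℝ), u) ≤ 𝓝 (0, (-1, u)) :=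
      (Filter.prod_mono nhdsWithin_le_nhds le_rfl).trans nhds_prod_eq.ge
    exact (tendsto_fst.eventually self_mem_nhdsWithin).and <|
      (htime.mono_left hle).eventually (lt_mem_nhds ht)
  have hlift : Tendsto (fun p : ℝ × (ℝ × Euc n) => (p.1, (p.2, z)))
      (𝓝[>] (0 : ℝ) ×ˢ 𝓝 ((-1 : ℝ), u)) (𝓝[>] (0 : ℝ) ×ˢ 𝓝 (((-1 : ℝ), u), z)) :=
    tendsto_fst.prodMk (tendsto_snd.prodMk_nhds tendsto_const_nhds)
  refine hlift.frequently ((hquot.and_eventually hpos).mono ?_)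
  rintro ⟨h, v⟩ ⟨hlt, hh, hpos⟩
  rw [hWr] at hlt
  exact ⟨hpos, EReal.le_coe_add_mul_of_inv_mul_sub_lt hh hlt⟩

theorem two_mul_sub_le_dist_of_mem_negPolarQ (ht : 0 < t) {pt N : ℝ} (hpt : 0 < pt) (hN : 0 ≤ N)
    (hpolar : ((pt, (0 : Euc n)), (0 : ℝ)) ∈ negPolarQ (contCone (eepiPos W) ((t, x), Wr))) :
    ∃ r > 0, ∀ s y, t < s → (N + 1) * (s - t) ≤ r → dist y x ≤ r →
      W (s, y) ≤ ((Wr + N * (s - t) : ℝ) : EReal) → 2 * (s - t) ≤ dist y x := by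
  let g : ((ℝ × Euc n) × ℝ) →L[ℝ] ℝ := pt • ((ContinuousLinearMap.fst ℝ ℝ (Euc n)).comp
    (ContinuousLinearMap.fst ℝ (ℝ × Euc n) ℝ))
  obtain ⟨r, hr, hreg⟩ := le_mul_dist_of_forall_contCone_le_zero (g := g)
    (mem_negPolarQ_horizontal_iff.1 hpolar) (δ := pt / (N + 3)) (by positivity)
  refine ⟨r, hr, fun s y hts hsr hyr hW => ?_⟩
  have hst : 0 < s - t := sub_pos.2 hts
  set d := dist y x
  have hdist : dist (((s, y), Wr + N * (s - t)) : (ℝ × Euc n) × ℝ) ((t, x), Wr)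
      = max (max (s - t) d) (N * (s - t)) := by
    simp [d, Prod.dist_eq, Real.dist_eq, abs_of_pos hst, abs_of_nonneg hN]
  have hmax : max (max (s - t) d) (N * (s - t)) ≤ (N + 1) * (s - t) + d :=
    max_le (max_le (by nlinarith [dist_nonneg (x := y) (y := x)]) (by nlinarith))
      (by nlinarith [dist_nonneg (x := y) (y := x)])
  have hnormal : pt * (s - t) ≤ pt / (N + 3) * max (max (s - t) d) (N * (s - t)) := by
    simpa [g, hdist] using hreg ((s, y), Wr + N * (s - t)) ⟨show 0 < s by linarith, hW⟩
      (by rw [hdist]; exact max_le (max_le (by nlinarith) hyr) (by nlinarith))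
  rw [div_mul_eq_mul_div, le_div_iff₀ (by linarith)] at hnormal
  have : pt * ((N + 3) * (s - t)) ≤ pt * ((N + 1) * (s - t) + d) := by
    nlinarith [mul_le_mul_of_nonneg_left hmax hpt.le]
  linarith [le_of_mul_le_mul_left this hpt]

theorem mem_subdiffP_of_proximal {q p : ℝ × Euc n} {K : ℝ}
    (h : ∀ᶠ z in 𝓝 q,
      W q + ((p.1 * (z.1 - q.1) + ⟪p.2, z.2 - q.2⟫ - K * ‖z - q‖ ^ 2 : ℝ) : EReal) ≤ W z) :
    p ∈ subdiffP W q := by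
  intro ε hε
  have hsmall : ∀ᶠ z in 𝓝 q, K * ‖z - q‖ < ε :=
    ((by fun_prop : Continuous fun z => K * ‖z - q‖).tendsto' q 0 (by simp)).eventually
      (gt_mem_nhds hε)
  filter_upwards [h, hsmall] with z hz hzε
  refine le_trans (add_le_add_right (EReal.coe_le_coe_iff.2 ?_) _) hz
  nlinarith [norm_nonneg (z - q)]

theorem fst_le_of_mem_subdiffP {L : Euc n → Euc n → ℝ}
    (hsub : ∀ t : ℝ, ∀ x : Euc n, 0 < t → ∀ p ∈ subdiffP W (t, x),
      (p.1 : ℝ) + Ham L x (-p.2) ≤ (0 : EReal))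
    {q p : ℝ × Euc n} (hq : 0 < q.1) (hp : p ∈ subdiffP W q) : p.1 ≤ L q.2 0 := by
  have hHam : ((-L q.2 0 : ℝ) : EReal) ≤ Ham L q.2 (-p.2) := by
    have := le_iSup (fun u : Euc n => ((⟪-p.2, u⟫ - L q.2 u : ℝ) : EReal)) 0
    simp only [inner_zero_right, zero_sub] at this
    exact this
  have := (add_le_add_right hHam (p.1 : EReal)).trans (hsub q.1 q.2 hq p hp)
  norm_cast at this
  linarith

end Epigraph

section Penalization

variable {n : ℕ} {W : ℝ × Euc n → EReal} {t Wr : ℝ} {x : Euc n}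

def penalty (t : ℝ) (x : Euc n) (A C N : ℝ) (z : ℝ × Euc n) : ℝ :=
  A * (z.1 - t) ^ 2 + C * ‖z.2 - x‖ ^ 2 - N * (z.1 - t)

theorem penalty_sub_penalty_ge {A C N : ℝ} (hA : 0 ≤ A) (hC : 0 ≤ C) (q z : ℝ × Euc n) :
    (N - 2 * A * (q.1 - t)) * (z.1 - q.1) + ⟪-(2 * C) • (q.2 - x), z.2 - q.2⟫
      - (A + C) * ‖z - q‖ ^ 2 ≤ penalty t x A C N q - penalty t x A C N z := by
  have hexpand : ‖z.2 - x‖ ^ 2 = ‖q.2 - x‖ ^ 2 + 2 * ⟪q.2 - x, z.2 - q.2⟫ + ‖z.2 - q.2‖ ^ 2 := by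
    rw [← norm_add_sq_real, sub_add_sub_cancel']
  have h1 : (z.1 - q.1) ^ 2 ≤ ‖z - q‖ ^ 2 := by
    simpa [sq_abs] using pow_le_pow_left₀ (abs_nonneg _) (norm_fst_le (z - q)) 2
  have h2 : ‖z.2 - q.2‖ ^ 2 ≤ ‖z - q‖ ^ 2 :=
    pow_le_pow_left₀ (norm_nonneg _) (norm_snd_le (z - q)) 2
  simp only [penalty, real_inner_smul_left]
  nlinarith [mul_le_mul_of_nonneg_left h1 hA, mul_le_mul_of_nonneg_left h2 hC]

theorem mem_subdiffP_of_isMinOn_add_penalty {A C N : ℝ} (hA : 0 ≤ A) (hC : 0 ≤ C)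
    {K : Set (ℝ × Euc n)} {q : ℝ × Euc n} (hK : K ∈ 𝓝 q)
    (hmin : IsMinOn (fun z => W z + penalty t x A C N z) K q) :
    (N - 2 * A * (q.1 - t), -(2 * C) • (q.2 - x)) ∈ subdiffP W q := by
  refine mem_subdiffP_of_proximal (K := A + C) ?_
  filter_upwards [hK] with z hz
  exact (add_le_add_right (EReal.coe_le_coe_iff.2 (penalty_sub_penalty_ge hA hC q z)) _).trans
    (EReal.add_coe_sub_le_of_add_coe_le (hmin hz))

theorem penalty_minimizer_bounds {N σ A C a d : ℝ} (hσ : 0 < σ) (hN : 0 ≤ N) (hA0 : 0 < A)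
    (hC0 : 0 < C) (hA : Wr < A * σ ^ 2) (hC : Wr + N * σ < C * σ ^ 2)
    (hCA : A ^ 2 * (Wr + N * σ) ≤ C) (ha : |a| ≤ σ)
    (hmin : A * a ^ 2 + C * d ^ 2 ≤ Wr + N * a) (hgrowth : 0 < a → 2 * a ≤ d) :
    |a| < σ ∧ d < σ ∧ 2 * A * a ≤ 1 := by
  have hNa : N * a ≤ N * σ := mul_le_mul_of_nonneg_left (abs_le.1 ha).2 hN
  have hCd : C * d ^ 2 ≤ Wr + N * σ := by nlinarith
  have hdσ : d < σ := by
    by_contra! h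
    nlinarith [mul_le_mul_of_nonneg_left (pow_le_pow_left₀ hσ.le h 2) hC0.le]
  have hAd : A * d ≤ 1 := by
    have : C * (A * d) ^ 2 ≤ C * 1 := by nlinarith [mul_le_mul_of_nonneg_left hCd (sq_nonneg A)]
    nlinarith [le_of_mul_le_mul_left this hC0]
  rcases le_or_gt a 0 with hneg | hpos
  · have haσ : a ^ 2 < σ ^ 2 := by
      by_contra! h
      nlinarith [mul_le_mul_of_nonneg_left h hA0.le]
    exact ⟨abs_lt_of_sq_lt_sq haσ hσ.le, hdσ, by nlinarith⟩
  · have := hgrowth hpos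
    exact ⟨abs_lt.2 ⟨by linarith, by linarith⟩, hdσ, by nlinarith⟩

/-- A form of Rockafellar's lemma on horizontal normals. -/
theorem exists_mem_subdiffP_le_fst (hW0 : ∀ q, 0 ≤ W q)
    (hWlsc : LowerSemicontinuousOn W {q : ℝ × Euc n | 0 < q.1}) (ht : 0 < t)
    (hWr : W (t, x) = Wr) {pt : ℝ} (hpt : 0 < pt)
    (hpolar : ((pt, (0 : Euc n)), (0 : ℝ)) ∈ negPolarQ (contCone (eepiPos W) ((t, x), Wr)))
    (M : ℝ) {ρ : ℝ} (hρ : 0 < ρ) : ∃ q ∈ ball (t, x) ρ, ∃ p ∈ subdiffP W q, M ≤ p.1 := by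
  set N := max M 0 + 1
  have hN : 0 ≤ N := by positivity
  have hWr0 : 0 ≤ Wr := by simpa [hWr] using hW0 (t, x)
  obtain ⟨r, hr, hgrowth⟩ := two_mul_sub_le_dist_of_mem_negPolarQ ht hpt hN hpolar
  obtain ⟨σ, hσ, hσt, hσρ, hσr⟩ : ∃ σ, 0 < σ ∧ σ < t ∧ σ ≤ ρ ∧ (N + 1) * σ ≤ r :=
    ⟨min (min (t / 2) ρ) (r / (N + 1)), by positivity,
      by linarith [min_le_left (min (t / 2) ρ) (r / (N + 1)), min_le_left (t / 2) ρ],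
      (min_le_left _ _).trans (min_le_right _ _),
      (mul_le_mul_of_nonneg_left (min_le_right _ _) (by positivity)).trans
        (mul_div_cancel₀ _ (by positivity)).le⟩
  -- `A` keeps the minimiser off the face `s = t - σ`; `C` keeps it off the lateral faces and
  -- makes `A * |y - x| ≤ 1` there, so that the time component `N - 2A(s - t)` stays `≥ N - 1`.
  set A := (Wr + 1) / σ ^ 2
  set C := (Wr + N * σ + 1) / σ ^ 2 + A ^ 2 * (Wr + N * σ)
  have hA : 0 < A := by positivity
  have hC : 0 < C := by positivity
  have hKpos : closedBall (t, x) σ ⊆ {q : ℝ × Euc n | 0 < q.1} := fun q hq => by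
    rw [← closedBall_prod_same, Real.closedBall_eq_Icc] at hq
    exact show 0 < q.1 by linarith [hq.1.1]
  obtain ⟨q, hqK, hmin⟩ := hWlsc.exists_isMinOn_add_coe (isCompact_closedBall (t, x) σ) hKpos
    ⟨(t, x), mem_closedBall_self hσ.le⟩ (ψ := penalty t x A C N) (by unfold penalty; fun_prop)
  set a := q.1 - t
  set d := dist q.2 x
  have hpen : penalty t x A C N q = A * a ^ 2 + C * d ^ 2 - N * a := by
    simp [penalty, a, d, dist_eq_norm]
  have hq : W q ≤ ((Wr - penalty t x A C N q : ℝ) : EReal) := by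
    rw [EReal.coe_sub, EReal.le_sub_iff_add_le (.inl (EReal.coe_ne_bot _))
      (.inl (EReal.coe_ne_top _))]
    simpa [hWr, penalty] using hmin (mem_closedBall_self hσ.le)
  have hWq : 0 ≤ Wr - penalty t x A C N q := by exact_mod_cast (hW0 q).trans hq
  rw [← closedBall_prod_same] at hqK
  have ha : |a| ≤ σ := by simpa [a, Real.dist_eq] using hqK.1
  have hgrowth' : 0 < a → 2 * a ≤ d := fun hpos =>
    hgrowth q.1 q.2 (by linarith) (by nlinarith [abs_le.1 ha]) (by nlinarith [hqK.2.out])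
      (hq.trans (EReal.coe_le_coe_iff.2 (by nlinarith)))
  obtain ⟨haσ, hdσ, hAa⟩ := penalty_minimizer_bounds (Wr := Wr) hσ hN hA hC
    (by rw [div_mul_cancel₀ _ (by positivity)]; linarith)
    (by
      have hCσ : C * σ ^ 2 = Wr + N * σ + 1 + A ^ 2 * (Wr + N * σ) * σ ^ 2 := by
        simp only [C]; rw [add_mul, div_mul_cancel₀ _ (by positivity)]
      have : 0 ≤ A ^ 2 * (Wr + N * σ) * σ ^ 2 := by positivity
      linarith)
    (by linarith [div_nonneg (by positivity : 0 ≤ Wr + N * σ + 1) (sq_nonneg σ)])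
    ha (by linarith) hgrowth'
  have hqball : q ∈ ball (t, x) σ := by
    rw [← ball_prod_same]
    exact ⟨by simpa [a, Real.dist_eq] using haσ, hdσ⟩
  refine ⟨q, ball_subset_ball hσρ hqball, _,
    mem_subdiffP_of_isMinOn_add_penalty hA.le hC.le (closedBall_mem_nhds_of_mem hqball) hmin, ?_⟩
  linarith [le_max_left M 0]

end Penalization

theorem stmt16_general {n : ℕ} (L : Euc n → Euc n → ℝ) (W : ℝ × Euc n → EReal)
    (hLc : Continuous (fun q : Euc n × Euc n => L q.1 q.2))
    (hW0 : ∀ q, 0 ≤ W q)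
    (hWlsc : LowerSemicontinuousOn W {q : ℝ × Euc n | 0 < q.1})
    (htech1 : ∀ t : ℝ, ∀ x : Euc n, 0 < t → W (t, x) ≠ ⊤ →
      ∃ u : Euc n, Dup W (t, x) ((-1:ℝ), u) < ⊤)
    (hsub : ∀ t : ℝ, ∀ x : Euc n, 0 < t → ∀ p ∈ subdiffP W (t, x),
      (p.1 : ℝ) + Ham L x (-p.2) ≤ (0 : EReal)) :
    ∀ t : ℝ, ∀ x : Euc n, 0 < t → W (t, x) ≠ ⊤ → ∀ pt : ℝ,
      ((pt, (0 : Euc n)), (0:ℝ)) ∈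
        negPolarQ (contCone (eepiPos W) ((t, x), (W (t, x)).toReal)) →
      pt = 0 := by
  intro t x ht hfin pt hpt
  have hWr : W (t, x) = ((W (t, x)).toReal : EReal) :=
    (EReal.coe_toReal hfin (ne_bot_of_le_ne_bot EReal.zero_ne_bot (hW0 _))).symm
  have hnonneg : 0 ≤ pt := by
    obtain ⟨u, hu⟩ := htech1 t x ht hfin
    obtain ⟨z, hz⟩ := exists_mem_contCone_eepiPos_of_Dup_lt_top ht hWr hu
    have : pt * -1 ≤ 0 := mem_negPolarQ_horizontal_iff.1 hpt _ hz
    linarith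
  refine le_antisymm ?_ hnonneg
  by_contra! hpos
  obtain ⟨ρ, hρ, hLρ⟩ : ∃ ρ > 0, ∀ y, dist y x < ρ → L y 0 < L x 0 + 1 :=
    Metric.eventually_nhds_iff.1 <|
      ((hLc.comp (continuous_id.prodMk continuous_const)).tendsto x).eventually
        (gt_mem_nhds (lt_add_one (L x 0)))
  obtain ⟨q, hq, p, hp, hMp⟩ :=
    exists_mem_subdiffP_le_fst hW0 hWlsc ht hWr hpos hpt (L x 0 + 1) (lt_min hρ ht)
  rw [← ball_prod_same, Real.ball_eq_Ioo] at hq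
  have hpL := fst_le_of_mem_subdiffP hsub (by linarith [hq.1.1, min_le_right ρ t]) hp
  linarith [hLρ q.2 (lt_of_lt_of_le hq.2 (min_le_left ρ t))]

theorem stmt16 {n : ℕ} (L : Euc n → Euc n → ℝ) (W : ℝ × Euc n → EReal)
    (hL0 : ∀ x u, 0 ≤ L x u)
    (hLc : Continuous (fun q : Euc n × Euc n => L q.1 q.2))
    (hW0 : ∀ q, 0 ≤ W q)
    (hWlsc : LowerSemicontinuousOn W {q : ℝ × Euc n | 0 < q.1})
    (htech1 : ∀ t : ℝ, ∀ x : Euc n, 0 < t → W (t, x) ≠ ⊤ →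
      ∃ u : Euc n, Dup W (t, x) ((-1:ℝ), u) < ⊤)
    (hsub : ∀ t : ℝ, ∀ x : Euc n, 0 < t → ∀ p ∈ subdiffP W (t, x),
      (p.1 : ℝ) + Ham L x (-p.2) ≤ (0 : EReal)) :
    ∀ t : ℝ, ∀ x : Euc n, 0 < t → W (t, x) ≠ ⊤ → ∀ pt : ℝ,
      ((pt, (0 : Euc n)), (0:ℝ)) ∈
        negPolarQ (contCone (eepiPos W) ((t, x), (W (t, x)).toReal)) →
      pt = 0 :=
  stmt16_general L W hLc hW0 hWlsc htech1 hsub
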